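/- arXiv:2412.13085 — 2 statements merged into one kernel-verified Lean document; each statement's English description precedes it below -/
import Mathlib

section
/- For all complex z with Re(z) < 0 (avoiding the cuts along ±iy, y ≥ 1), the function ξ̄(z) = (1/2)z(z²+1)^{1/2} + (1/2)log(z + (z²+1)^{1/2}) satisfies ξ̄(z) = -(1/2)z² - (1/2)log(-2z) - 1/4 + O(z^{-2}) as z → ∞ with Re(z) < 0. -/
/-!
For `Re z < 0` put `w = z⁻²` and `v = (1 + w)^{1/2}`. Both `(z² + 1)^{1/2}` and `-z v` are square
roots of `z² + 1` with positive real part, so they agree, and then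
`z + (z² + 1)^{1/2} = z (1 - v) = (-2z · (1 + v)/2)⁻¹` with both factors in the right half plane.
This gives the exact identity
`ξ̄(z) + z²/2 + log(-2z)/2 + 1/4 = -(z²/2)(v - 1 - w/2) - log((1 + v)/2)/2`,
and both terms are `O(|w|)` because `v - 1 = w / (v + 1)` with `|v + 1| ≥ 1`.
-/

open Complex Filter Asymptotics

noncomputable def xiBar (z : ℂ) : ℂ :=
  z * (z ^ 2 + 1) ^ ((1 : ℂ) / 2) / 2 + Complex.log (z + (z ^ 2 + 1) ^ ((1 : ℂ) / 2)) / 2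

namespace Complex

lemma re_cpow_one_half_nonneg (x : ℂ) : 0 ≤ (x ^ (1 / 2 : ℂ)).re := by
  rw [one_div, cpow_inv_two_re]
  exact Real.sqrt_nonneg _

lemma re_cpow_one_half_pos {x : ℂ} (hx : x ∈ slitPlane) : 0 < (x ^ (1 / 2 : ℂ)).re := by
  rw [one_div, cpow_inv_two_re, Real.sqrt_pos]
  rcases mem_slitPlane_iff.mp hx with hre | him
  · linarith [re_le_norm x]
  · linarith [abs_re_lt_norm.mpr him, neg_abs_le x.re]

lemma cpow_one_half_sq (x : ℂ) : (x ^ (1 / 2 : ℂ)) ^ 2 = x := by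
  simp

lemma cpow_one_half_eq_of_sq_eq {x b : ℂ} (hb : b ^ 2 = x) (hre : 0 < b.re) :
    x ^ (1 / 2 : ℂ) = b := by
  have hfac : (x ^ (1 / 2 : ℂ) - b) * (x ^ (1 / 2 : ℂ) + b) = 0 := by
    linear_combination cpow_one_half_sq x - hb
  rcases mul_eq_zero.mp hfac with h | h
  · exact sub_eq_zero.mp h
  · have h_re := congrArg re h
    simp only [add_re, zero_re] at h_re
    linarith [re_cpow_one_half_nonneg x]

lemma log_mul_of_re_pos {x y : ℂ} (hx : 0 < x.re) (hy : 0 < y.re) :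
    log (x * y) = log x + log y := by
  have hx' := abs_lt.mp (abs_arg_lt_pi_div_two_iff.mpr (Or.inl hx))
  have hy' := abs_lt.mp (abs_arg_lt_pi_div_two_iff.mpr (Or.inl hy))
  refine log_mul (ne_zero_of_re_pos hx) (ne_zero_of_re_pos hy) ⟨?_, ?_⟩ <;>
    linarith [Real.pi_pos]

lemma log_inv_of_re_pos {x : ℂ} (hx : 0 < x.re) : log x⁻¹ = -log x :=
  log_inv x (slitPlane_arg_ne_pi (mem_slitPlane_iff.mpr (Or.inl hx)))

lemma one_le_norm_cpow_one_half_add_one (x : ℂ) : 1 ≤ ‖x ^ (1 / 2 : ℂ) + 1‖ :=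
  calc (1 : ℝ) ≤ (x ^ (1 / 2 : ℂ) + 1).re := by
        simpa only [add_re, one_re, le_add_iff_nonneg_left] using re_cpow_one_half_nonneg x
    _ ≤ _ := re_le_norm _

lemma norm_cpow_one_half_one_add_sub_one_le (w : ℂ) : ‖(1 + w) ^ (1 / 2 : ℂ) - 1‖ ≤ ‖w‖ := by
  set v := (1 + w) ^ (1 / 2 : ℂ)
  have h : ‖v - 1‖ * ‖v + 1‖ = ‖w‖ := by
    rw [← norm_mul]
    congr 1
    linear_combination cpow_one_half_sq (1 + w)
  nlinarith [norm_nonneg (v - 1), one_le_norm_cpow_one_half_add_one (1 + w)]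

lemma norm_cpow_one_half_one_add_sub_one_sub_half_le (w : ℂ) :
    ‖(1 + w) ^ (1 / 2 : ℂ) - 1 - w / 2‖ ≤ ‖w‖ ^ 2 / 2 := by
  set v := (1 + w) ^ (1 / 2 : ℂ)
  have hv : 1 ≤ ‖v + 1‖ := one_le_norm_cpow_one_half_add_one (1 + w)
  -- `v - 1 = w / (v + 1)`, so the second-order remainder is `w (1 - v) / (2 (v + 1))`
  have hid : v - 1 - w / 2 = w * (1 - v) / (2 * (v + 1)) := by
    have : v + 1 ≠ 0 := norm_pos_iff.mp (by linarith)
    field_simp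
    linear_combination 2 * cpow_one_half_sq (1 + w)
  rw [hid, norm_div, norm_mul, norm_mul, norm_sub_rev, Complex.norm_two,
    div_le_iff₀ (by positivity)]
  nlinarith [norm_cpow_one_half_one_add_sub_one_le w, norm_nonneg w, norm_nonneg (v - 1)]

lemma im_inv_sq (z : ℂ) : ((z ^ 2)⁻¹).im = -(2 * z.re * z.im) / normSq (z ^ 2) := by
  rw [inv_im, pow_two, mul_im]
  ring

variable {z : ℂ}

lemma one_add_inv_sq_mem_slitPlane (hz : z.re < 0) : 1 + (z ^ 2)⁻¹ ∈ slitPlane := by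
  rw [mem_slitPlane_iff]
  by_cases him : z.im = 0
  · left
    rw [← re_add_im z, him, ofReal_zero, zero_mul, add_zero, ← ofReal_pow, ← ofReal_inv,
      ← ofReal_one, ← ofReal_add, ofReal_re]
    have : z.re ≠ 0 := hz.ne
    positivity
  · right
    have hz0 : z ^ 2 ≠ 0 := pow_ne_zero 2 (fun h => him (by simp [h]))
    rw [add_im, one_im, zero_add, im_inv_sq]
    exact div_ne_zero (by simpa using ⟨hz.ne, him⟩) (normSq_pos.mpr hz0).ne'

lemma re_neg_mul_cpow_one_half_one_add_inv_sq_pos (hz : z.re < 0) :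
    0 < (-z * (1 + (z ^ 2)⁻¹) ^ (1 / 2 : ℂ)).re := by
  set v := (1 + (z ^ 2)⁻¹) ^ (1 / 2 : ℂ)
  have hv : 0 < v.re := re_cpow_one_half_pos (one_add_inv_sq_mem_slitPlane hz)
  -- `2 v.re v.im = im (z⁻²)`, whose sign is that of `z.im` when `z.re < 0`
  have him : 0 ≤ z.im * v.im * (2 * v.re) := by
    have hsq := congrArg im (cpow_one_half_sq (1 + (z ^ 2)⁻¹))
    rw [pow_two, mul_im, add_im, one_im, zero_add, im_inv_sq] at hsq
    rw [show z.im * v.im * (2 * v.re) = z.im * (v.re * v.im + v.im * v.re) by ring, hsq,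
      mul_div_assoc']
    exact div_nonneg (by nlinarith [sq_nonneg z.im]) (normSq_nonneg _)
  have : 0 ≤ z.im * v.im := nonneg_of_mul_nonneg_left him (by linarith)
  simp only [mul_re, neg_re, neg_im]
  nlinarith

lemma cpow_one_half_sq_add_one (hz : z.re < 0) :
    (z ^ 2 + 1) ^ (1 / 2 : ℂ) = -z * (1 + (z ^ 2)⁻¹) ^ (1 / 2 : ℂ) := by
  have hz0 : z ≠ 0 := fun h => by simp [h] at hz
  refine cpow_one_half_eq_of_sq_eq ?_ (re_neg_mul_cpow_one_half_one_add_inv_sq_pos hz)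
  rw [mul_pow, cpow_one_half_sq]
  field_simp

lemma log_add_cpow_one_half_sq_add_one (hz : z.re < 0) :
    log (z + (z ^ 2 + 1) ^ (1 / 2 : ℂ))
      = -(log (-2 * z) + log ((1 + (1 + (z ^ 2)⁻¹) ^ (1 / 2 : ℂ)) / 2)) := by
  have hz0 : z ≠ 0 := fun h => by simp [h] at hz
  have hs := cpow_one_half_sq_add_one hz
  set v := (1 + (z ^ 2)⁻¹) ^ (1 / 2 : ℂ)
  have hprod : -2 * z * ((1 + v) / 2) = -z + (z ^ 2 + 1) ^ (1 / 2 : ℂ) := by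
    rw [hs]
    ring
  have hinv : z + (z ^ 2 + 1) ^ (1 / 2 : ℂ) = (-2 * z * ((1 + v) / 2))⁻¹ := by
    refine eq_inv_of_mul_eq_one_left ?_
    rw [hs]
    linear_combination
      z ^ 2 * cpow_one_half_sq (1 + (z ^ 2)⁻¹) + mul_inv_cancel₀ (pow_ne_zero 2 hz0)
  have hprod_re : 0 < (-2 * z * ((1 + v) / 2)).re := by
    rw [hprod, add_re, neg_re]
    linarith [re_cpow_one_half_nonneg (z ^ 2 + 1)]
  have hz_re : 0 < (-2 * z).re := by
    simp only [mul_re, neg_re, neg_im, re_ofNat, im_ofNat]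
    linarith
  have hv_re : 0 < ((1 + v) / 2).re := by
    simp only [div_ofNat_re, add_re, one_re]
    linarith [re_cpow_one_half_nonneg (1 + (z ^ 2)⁻¹)]
  rw [hinv, log_inv_of_re_pos hprod_re, log_mul_of_re_pos hz_re hv_re]

lemma xiBar_sub_eq (hz : z.re < 0) :
    xiBar z - (-(z ^ 2) / 2 - log (-2 * z) / 2 - 1 / 4)
      = -(z ^ 2 / 2) * ((1 + (z ^ 2)⁻¹) ^ (1 / 2 : ℂ) - 1 - (z ^ 2)⁻¹ / 2)
        - log ((1 + (1 + (z ^ 2)⁻¹) ^ (1 / 2 : ℂ)) / 2) / 2 := by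
  have hz0 : z ≠ 0 := fun h => by simp [h] at hz
  rw [xiBar, log_add_cpow_one_half_sq_add_one hz, cpow_one_half_sq_add_one hz]
  linear_combination (-1 / 4 : ℂ) * mul_inv_cancel₀ (pow_ne_zero 2 hz0)

lemma norm_xiBar_sub_le (hz : z.re < 0) (hz_one : 1 ≤ ‖z‖) :
    ‖xiBar z - (-(z ^ 2) / 2 - log (-2 * z) / 2 - 1 / 4)‖ ≤ ‖(z ^ 2)⁻¹‖ := by
  have hz0 : z ≠ 0 := fun h => by simp [h] at hz
  rw [xiBar_sub_eq hz]
  set w := (z ^ 2)⁻¹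
  set v := (1 + w) ^ (1 / 2 : ℂ)
  have hw : ‖w‖ ≤ 1 := by
    rw [norm_inv, norm_pow]
    exact inv_le_one_of_one_le₀ (one_le_pow₀ hz_one)
  have hzw : ‖z ^ 2‖ * ‖w‖ = 1 := by
    rw [← norm_mul, mul_inv_cancel₀ (pow_ne_zero 2 hz0), norm_one]
  have h_taylor : ‖-(z ^ 2 / 2) * (v - 1 - w / 2)‖ ≤ ‖w‖ / 4 := by
    rw [norm_mul, norm_neg, norm_div, Complex.norm_two]
    calc ‖z ^ 2‖ / 2 * ‖v - 1 - w / 2‖ ≤ ‖z ^ 2‖ / 2 * (‖w‖ ^ 2 / 2) := by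
          gcongr
          exact norm_cpow_one_half_one_add_sub_one_sub_half_le w
      _ = ‖w‖ / 4 := by linear_combination (‖w‖ / 4) * hzw
  have h_log : ‖log ((1 + v) / 2) / 2‖ ≤ 3 / 8 * ‖w‖ := by
    have hv := norm_cpow_one_half_one_add_sub_one_le w
    have h_half : ‖(v - 1) / 2‖ ≤ 1 / 2 := by
      rw [norm_div, Complex.norm_two]
      linarith
    have h_log := norm_log_one_add_half_le_self h_half
    rw [norm_div, Complex.norm_two] at h_log
    rw [show (1 + v) / 2 = 1 + (v - 1) / 2 by ring, norm_div, Complex.norm_two]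
    linarith
  calc _ ≤ ‖-(z ^ 2 / 2) * (v - 1 - w / 2)‖ + ‖log ((1 + v) / 2) / 2‖ := norm_sub_le _ _
    _ ≤ ‖w‖ := by linarith [norm_nonneg w]

end Complex

/-- For the Liouville–Green variable
`ξ̄(z) = (1/2) z (z²+1)^{1/2} + (1/2) log (z + (z²+1)^{1/2})`,
as `z → ∞` with `Re z < 0` (off the cuts `±iy`, `y ≥ 1`) one has
`ξ̄(z) = -(1/2) z² - (1/2) log (-2z) - 1/4 + O(z⁻²)`. -/
theorem xi_bar_asymptotic_left_half_plane :
    (fun z : ℂ =>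
        (z * (z ^ 2 + 1) ^ ((1 : ℂ) / 2) / 2
          + Complex.log (z + (z ^ 2 + 1) ^ ((1 : ℂ) / 2)) / 2)
        - (-(z ^ 2) / 2 - Complex.log (-2 * z) / 2 - 1 / 4))
      =O[comap (fun z : ℂ => ‖z‖) atTop ⊓
          𝓟 {z : ℂ | z.re < 0 ∧ ¬(z.re = 0 ∧ 1 ≤ |z.im|)}]
        fun z : ℂ => (z ^ 2)⁻¹ := by
  refine IsBigO.of_bound 1 ?_
  rw [eventually_inf_principal]
  filter_upwards [(eventually_ge_atTop 1).comap (fun z : ℂ => ‖z‖)] with z hz_one hz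
  rw [one_mul]
  exact norm_xiBar_sub_le hz.1 hz_one
end

section
/- With E_s defined by E₁(β) = (1/24)β(5β²-6), E₂(β) = (1/16)(β²-1)²(5β²-2), and E_{s+1}(β) = (1/2)(β²-1)² E_s'(β) + (1/2)∫_{σ(s)}^{β}(p²-1)² Σ_{j=1}^{s-1} E_j'(p)E_{s-j}'(p) dp (σ(s)=1 for s odd, 0 for s even), one has E_{2s}(1) = E_{2s}(-1) = 0 for all s ≥ 1. -/
open intervalIntegral

/-- Lower integration limit: `σ(s) = 1` for `s` odd, `σ(s) = 0` for `s` even. -/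
noncomputable def sigmaLG (s : ℕ) : ℝ := if Odd s then 1 else 0

/-- The Liouville–Green coefficients `E_s`:
`E₁(β) = (1/24)β(5β²-6)`, `E₂(β) = (1/16)(β²-1)²(5β²-2)`, and for `s ≥ 2`
`E_{s+1}(β) = (1/2)(β²-1)² E_s'(β)
  + (1/2)∫_{σ(s)}^β (p²-1)² Σ_{j=1}^{s-1} E_j'(p) E_{s-j}'(p) dp`. -/
noncomputable def Ecoef : ℕ → ℝ → ℝ
  | 0 => fun _ => 0
  | 1 => fun β => β * (5 * β ^ 2 - 6) / 24
  | 2 => fun β => (β ^ 2 - 1) ^ 2 * (5 * β ^ 2 - 2) / 16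
  | (n + 3) => fun β =>
      (β ^ 2 - 1) ^ 2 * deriv (Ecoef (n + 2)) β / 2
      + (∫ p in sigmaLG (n + 2)..β, (p ^ 2 - 1) ^ 2 *
          ∑ j ∈ (Finset.Icc 1 (n + 1)).attach,
            deriv (Ecoef j.1) p * deriv (Ecoef (n + 2 - j.1)) p) / 2
  decreasing_by
  · omega
  · have := (Finset.mem_Icc.mp j.2).2; omega
  · have := (Finset.mem_Icc.mp j.2).1; omega

open Polynomial in
/-- An explicit antiderivative of a polynomial. -/
noncomputable def pAnti (Q : ℝ[X]) : ℝ[X] := Q.sum fun i a => C (a / (i + 1)) * X ^ (i + 1)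

open Polynomial in
lemma pAnti_derivative (Q : ℝ[X]) : derivative (pAnti Q) = Q := by
  unfold pAnti Polynomial.sum
  rw [map_sum]
  conv_rhs => rw [← Q.sum_C_mul_X_pow_eq]
  unfold Polynomial.sum
  refine Finset.sum_congr rfl fun i hi => ?_
  rw [derivative_C_mul, derivative_X_pow]
  push_cast
  rw [← mul_assoc, ← C_mul, div_mul_cancel₀]
  positivity

open Polynomial in
lemma pAnti_eval_zero (Q : ℝ[X]) : (pAnti Q).eval 0 = 0 := by
  unfold pAnti Polynomial.sum
  rw [eval_finset_sum]
  refine Finset.sum_eq_zero fun i hi => by simp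

open Polynomial in
lemma integral_poly (Q : ℝ[X]) (a b : ℝ) :
    (∫ x in a..b, Q.eval x) = (pAnti Q).eval b - (pAnti Q).eval a := by
  refine integral_eq_sub_of_hasDerivAt (f := fun x => (pAnti Q).eval x) (fun x _ => ?_)
    (Q.continuous.intervalIntegrable a b)
  have := (pAnti Q).hasDerivAt x
  rwa [pAnti_derivative] at this

open Polynomial in
/-- Key structural lemma: each `Ecoef s` is (the evaluation of) a polynomial, and has
parity `(-1)^s`. -/
lemma Ecoef_key (s : ℕ) :
    (∃ Q : ℝ[X], Ecoef s = fun β => Q.eval β) ∧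
      ∀ β : ℝ, Ecoef s (-β) = (-1) ^ s * Ecoef s β := by
  induction s using Nat.strong_induction_on with
  | _ s IH =>
  rcases s with _ | _ | _ | n
  · exact ⟨⟨0, by funext β; simp [Ecoef]⟩, fun β => by simp [Ecoef]⟩
  · refine ⟨⟨C (1/24) * (X * (C 5 * X ^ 2 - C 6)), ?_⟩, fun β => ?_⟩
    · funext β; simp [Ecoef]; ring
    · show Ecoef 1 (-β) = (-1) ^ 1 * Ecoef 1 β
      rw [Ecoef]; ring
  · refine ⟨⟨C (1/16) * ((X ^ 2 - 1) ^ 2 * (C 5 * X ^ 2 - C 2)), ?_⟩, fun β => ?_⟩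
    · funext β; simp [Ecoef]; ring
    · show Ecoef 2 (-β) = (-1) ^ 2 * Ecoef 2 β
      rw [Ecoef]; ring
  · -- inductive step, s = n + 3
    have IH' : ∀ m, m ≤ n + 2 →
        (∃ Q : ℝ[X], Ecoef m = fun β => Q.eval β) ∧
          ∀ β : ℝ, Ecoef m (-β) = (-1) ^ m * Ecoef m β := fun m hm => IH m (by omega)
    have hpoly : ∀ m, ∃ Q : ℝ[X], m ≤ n + 2 → Ecoef m = fun β => Q.eval β := by
      intro m
      by_cases hm : m ≤ n + 2
      · obtain ⟨Q, hQ⟩ := (IH' m hm).1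
        exact ⟨Q, fun _ => hQ⟩
      · exact ⟨0, fun h => absurd h hm⟩
    choose Qf hQf using hpoly
    have hderiv : ∀ m, m ≤ n + 2 →
        deriv (Ecoef m) = fun β => (derivative (Qf m)).eval β := by
      intro m hm
      rw [hQf m hm]
      funext β
      simp
    have dpar : ∀ m, m ≤ n + 2 → ∀ p : ℝ,
        deriv (Ecoef m) (-p) = (-1) ^ (m + 1) * deriv (Ecoef m) p := by
      intro m hm p
      have h1 : (fun x : ℝ => Ecoef m (-x)) = fun x => (-1 : ℝ) ^ m * Ecoef m x :=
        funext (IH' m hm).2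
      have h2 : deriv (fun x : ℝ => Ecoef m (-x)) p
          = deriv (fun x => (-1 : ℝ) ^ m * Ecoef m x) p := by rw [h1]
      rw [deriv_comp_neg, deriv_const_mul_field] at h2
      rw [pow_succ]
      linarith
    have hmem : ∀ j : {x // x ∈ Finset.Icc 1 (n + 1)}, 1 ≤ j.1 ∧ j.1 ≤ n + 1 :=
      fun j => Finset.mem_Icc.mp j.2
    set G : ℝ[X] := (X ^ 2 - 1) ^ 2 *
      ∑ j ∈ (Finset.Icc 1 (n + 1)).attach,
        derivative (Qf j.1) * derivative (Qf (n + 2 - j.1)) with hGdef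
    have hG : ∀ p : ℝ, ((p ^ 2 - 1) ^ 2 *
        ∑ j ∈ (Finset.Icc 1 (n + 1)).attach,
          deriv (Ecoef j.1) p * deriv (Ecoef (n + 2 - j.1)) p) = G.eval p := by
      intro p
      rw [hGdef]
      simp only [eval_mul, eval_pow, eval_sub, eval_X, eval_one, eval_finset_sum]
      congr 1
      refine Finset.sum_congr rfl fun j _ => ?_
      have hj := hmem j
      simp only [hderiv j.1 (by omega : j.1 ≤ n + 2), hderiv (n + 2 - j.1) (by omega : n + 2 - j.1 ≤ n + 2)]
    set R := pAnti G with hRdef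
    have hRzero : R.eval 0 = 0 := pAnti_eval_zero G
    have hint : ∀ a b : ℝ, (∫ p in a..b, (p ^ 2 - 1) ^ 2 *
        ∑ j ∈ (Finset.Icc 1 (n + 1)).attach,
          deriv (Ecoef j.1) p * deriv (Ecoef (n + 2 - j.1)) p)
        = R.eval b - R.eval a := by
      intro a b
      simp only [hG]
      exact integral_poly G a b
    have hEeq : ∀ β : ℝ, Ecoef (n + 3) β =
        (β ^ 2 - 1) ^ 2 * (derivative (Qf (n + 2))).eval β / 2
          + (R.eval β - R.eval (sigmaLG (n + 2))) / 2 := by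
      intro β
      rw [Ecoef]
      simp only [hint, hderiv (n + 2) le_rfl]
    have hDpar : ∀ β : ℝ, (derivative (Qf (n + 2))).eval (-β)
        = (-1) ^ (n + 3) * (derivative (Qf (n + 2))).eval β := by
      intro β
      have := dpar (n + 2) le_rfl β
      rw [hderiv (n + 2) le_rfl] at this
      simpa using this
    have hGpar : ∀ p : ℝ, G.eval (-p) = (-1) ^ n * G.eval p := by
      intro p
      rw [← hG p, ← hG (-p)]
      have hterm : ∀ j ∈ (Finset.Icc 1 (n + 1)).attach,
          deriv (Ecoef j.1) (-p) * deriv (Ecoef (n + 2 - j.1)) (-p)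
            = (-1 : ℝ) ^ n * (deriv (Ecoef j.1) p * deriv (Ecoef (n + 2 - j.1)) p) := by
        intro j _
        obtain ⟨h1, h2⟩ := hmem j
        rw [dpar j.1 (by omega), dpar (n + 2 - j.1) (by omega)]
        have hpow : (-1 : ℝ) ^ (j.1 + 1) * (-1) ^ (n + 2 - j.1 + 1) = (-1) ^ n := by
          rw [← pow_add]
          have he : j.1 + 1 + (n + 2 - j.1 + 1) = n + 4 := by omega
          rw [he, pow_add]
          norm_num
        linear_combination (deriv (Ecoef j.1) p * deriv (Ecoef (n + 2 - j.1)) p) * hpow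
      rw [Finset.sum_congr rfl hterm, ← Finset.mul_sum]
      have hsq : ((-p) ^ 2 - 1 : ℝ) ^ 2 = (p ^ 2 - 1) ^ 2 := by ring
      rw [hsq]
      ring
    have hRneg : ∀ b : ℝ, R.eval (-b) = (-1) ^ (n + 1) * R.eval b := by
      intro b
      have h1 : (∫ x in (0 : ℝ)..(-b), G.eval x) = R.eval (-b) - R.eval 0 := integral_poly G 0 (-b)
      have h2 : (∫ x in (b : ℝ)..(0 : ℝ), G.eval (-x)) = ∫ x in (0 : ℝ)..(-b), G.eval x := by
        have := intervalIntegral.integral_comp_neg (a := b) (b := (0 : ℝ)) (f := fun x => G.eval x)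
        simpa using this
      have h3 : (∫ x in (b : ℝ)..(0 : ℝ), G.eval (-x))
          = (-1) ^ n * ∫ x in (b : ℝ)..(0 : ℝ), G.eval x := by
        simp only [hGpar]
        exact intervalIntegral.integral_const_mul _ _
      have h4 : (∫ x in (b : ℝ)..(0 : ℝ), G.eval x) = R.eval 0 - R.eval b := integral_poly G b 0
      rw [h2, h1, hRzero] at h3
      rw [h4, hRzero] at h3
      rw [pow_succ]
      linarith
    refine ⟨⟨C (1/2) * ((X ^ 2 - 1) ^ 2 * derivative (Qf (n + 2)))
        + C (1/2) * (R - C (R.eval (sigmaLG (n + 2)))), ?_⟩, ?_⟩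
    · funext β
      rw [hEeq β]
      simp only [eval_add, eval_mul, eval_pow, eval_sub, eval_X, eval_one, eval_C]
      ring
    · intro β
      rw [hEeq β, hEeq (-β), hDpar β, hRneg β]
      have hsq : ((-β) ^ 2 - 1 : ℝ) ^ 2 = (β ^ 2 - 1) ^ 2 := by ring
      rw [hsq]
      rcases Nat.even_or_odd n with he | ho
      · have hσ : sigmaLG (n + 2) = 0 := by
          rw [sigmaLG, if_neg]
          rw [Nat.not_odd_iff_even]
          exact he.add (by norm_num)
        rw [hσ, hRzero]
        have e1 : (-1 : ℝ) ^ n = 1 := he.neg_one_pow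
        have e2 : (-1 : ℝ) ^ (n + 1) = -1 := by rw [pow_succ, e1]; norm_num
        have e3 : (-1 : ℝ) ^ (n + 3) = -1 := by
          rw [pow_add, e1]; norm_num
        rw [e2, e3]
        ring
      · have e2 : (-1 : ℝ) ^ (n + 1) = 1 := (ho.add_one).neg_one_pow
        have e3 : (-1 : ℝ) ^ (n + 3) = 1 := by
          have : (-1 : ℝ) ^ (n + 3) = (-1) ^ (n + 1) * (-1) ^ 2 := by rw [← pow_add]
          rw [this, e2]; norm_num
        rw [e2, e3]
        ring

/-- for every `s ≥ 1`, `E_{2s}(1) = E_{2s}(-1) = 0`. -/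
theorem Ecoef_even_vanish (s : ℕ) (hs : 1 ≤ s) :
    Ecoef (2 * s) 1 = 0 ∧ Ecoef (2 * s) (-1) = 0 := by
  have h1 : Ecoef (2 * s) 1 = 0 := by
    rcases s with _ | _ | k
    · omega
    · norm_num [Ecoef]
    · have hss : 2 * (k + 2) = (2 * k + 1) + 3 := by ring
      rw [hss, Ecoef]
      have hσ : sigmaLG (2 * k + 1 + 2) = 1 := by
        rw [sigmaLG, if_pos ⟨k + 1, by ring⟩]
      rw [hσ]
      norm_num [intervalIntegral.integral_same]
  refine ⟨h1, ?_⟩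
  have hpar := (Ecoef_key (2 * s)).2 1
  have he : (-1 : ℝ) ^ (2 * s) = 1 := (even_two_mul s).neg_one_pow
  rw [he] at hpar
  simpa [h1] using hpar
end
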